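/- Let L be a finite graded lattice of rank n ≥ 2 whose proper part has nonzero (n-2)-nd reduced homology over k, and let b be any coatom of L. Then there exists an atom a of L that is not comparable to b and such that the order complex of the open interval (a, 1̂) has nonzero (n-3)-rd reduced homology over k. -/

import Mathlib

set_option maxSynthPendingDepth 2

open Finset

variable {α : Type*}

/-- A `j`-vertex simplex of the order complex of `s ⊆ α`: a strictly increasing
`j`-tuple of elements of `s` (for `j = 0` this is the unique empty simplex). -/
def OrderedSimplex [Preorder α] (s : Set α) (j : ℕ) : Type _ :=
  {f : Fin j → α // StrictMono f ∧ ∀ i, f i ∈ s}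

/-- The module of simplicial chains with `j` vertices (i.e. of degree `j - 1`)
of the order complex of `s`, with coefficients in `K`.  Since degree `j = 0`
corresponds to the empty simplex, this is the *augmented* chain complex. -/
abbrev SimpChains (K : Type*) [CommRing K] [Preorder α] (s : Set α) (j : ℕ) :=
  OrderedSimplex s j →₀ K

/-- The `i`-th face of a simplex (delete the `i`-th vertex). -/
def OrderedSimplex.face [Preorder α] {s : Set α} {j : ℕ}
    (σ : OrderedSimplex s (j + 1)) (i : Fin (j + 1)) : OrderedSimplex s j :=
  ⟨σ.1 ∘ Fin.succAbove i, σ.2.1.comp (Fin.strictMono_succAbove i), fun _ => σ.2.2 _⟩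

/-- The simplicial boundary map (for `j = 0` it is the augmentation). -/
noncomputable def simpBoundary (K : Type*) [CommRing K] [Preorder α] (s : Set α) (j : ℕ) :
    SimpChains K s (j + 1) →ₗ[K] SimpChains K s j :=
  Finsupp.lsum K fun σ => ∑ i : Fin (j + 1), ((-1 : K) ^ (i : ℕ)) • Finsupp.lsingle (σ.face i)

/-- Cycles with `j` vertices (for `j = 0` every chain is a cycle). -/
noncomputable def simpCycles (K : Type*) [CommRing K] [Preorder α] (s : Set α) :
    (j : ℕ) → Submodule K (SimpChains K s j)
  | 0 => ⊤
  | (i + 1) => LinearMap.ker (simpBoundary K s i)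

/-- Boundaries with `j` vertices. -/
noncomputable def simpBoundaries (K : Type*) [CommRing K] [Preorder α] (s : Set α) (j : ℕ) :
    Submodule K (SimpChains K s j) :=
  LinearMap.range (simpBoundary K s j)

/-- `ReducedHomology K s j` is the reduced simplicial homology group
`H̃_{j-1}(Δ(s); K)` of the order complex of `s` (the index `j` counts vertices,
so `j = 0` gives `H̃₋₁` and `j = n - 1` gives `H̃_{n-2}`). -/
noncomputable def ReducedHomology (K : Type*) [CommRing K] [Preorder α] (s : Set α) (j : ℕ) :=
  ↥(simpCycles K s j) ⧸ (simpBoundaries K s j).comap (simpCycles K s j).subtype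

noncomputable instance (K : Type*) [CommRing K] [Preorder α] (s : Set α) (j : ℕ) :
    AddCommGroup (ReducedHomology K s j) := by unfold ReducedHomology; infer_instance

noncomputable instance (K : Type*) [CommRing K] [Preorder α] (s : Set α) (j : ℕ) :
    Module K (ReducedHomology K s j) := by unfold ReducedHomology; infer_instance

/-- The proper part `L ∖ {⊥, ⊤}` of a bounded poset. -/
def properPart (α : Type*) [Preorder α] [BoundedOrder α] : Set α :=
  {x | x ≠ ⊥ ∧ x ≠ ⊤}

/-- The flag `f`-vector entry `f_P(S)`: the number of chains in the proper part
of `P` whose set of ranks is exactly `S`. -/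
noncomputable def flagf (α : Type*) [Preorder α] [BoundedOrder α] [GradeMinOrder ℕ α]
    (S : Finset ℕ) : ℕ :=
  Nat.card {C : Finset α // IsChain (· ≤ ·) (C : Set α) ∧ (↑C ⊆ properPart α) ∧
    C.image (grade ℕ) = S}

/-- The multinomial coefficient `α_n(S) = n! / (s₁!·(s₂-s₁)!⋯(n-s_l)!)`
for `S = {s₁ < s₂ < ⋯ < s_l} ⊆ [n-1]`; it equals `f_{B_n}(S)`. -/
def alphaMulti (n : ℕ) (S : Finset ℕ) : ℕ :=
  n.factorial /
    ((S.sort (· ≤ ·) ++ [n]).zipWith (fun b a => (b - a).factorial)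
      (0 :: S.sort (· ≤ ·))).prod

/-- An element `x` of a graded bounded poset is *good* if `x = ⊥` or the order
complex of the open interval `(⊥, x)` has nontrivial top reduced homology
`H̃_{ρ(x)-2}` over `K`. -/
def IsGoodElement (K : Type*) [CommRing K] [Preorder α] [OrderBot α] [GradeMinOrder ℕ α]
    (x : α) : Prop :=
  x = ⊥ ∨ Nontrivial (ReducedHomology K (Set.Ioo (⊥ : α) x) (grade ℕ x - 1))

/-! A nonzero top cycle `z` of the order complex of the proper part is a combination of maximal
chains. Since a codimension-one face of a maximal chain remembers the deleted rank, the cycle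
condition says that each chain of the support shares each of its faces with another chain of the
support. If every chain of the support started at an atom below `b`, then inductively all their
elements would lie below `b`: the element of rank `k + 1` is the join of the two distinct
rank-`k` elements of two chains differing only at rank `k`. So all their coatoms would be `b`,
which is impossible for two chains differing only at the coatom.
Hence some chain of the support starts at an atom `a ≰ b`. Restricting `z` to the chains
starting at `a` and deleting `a` gives a nonzero cycle of `Δ(a, ⊤)`; it lies in the top degree,
where there are no boundaries. -/

lemma StrictMono.add_sub_le_apply_of_fin {n : ℕ} {f : Fin n → ℕ} (hf : StrictMono f)
    {i j : Fin n} (hij : i ≤ j) : f i + ((j : ℕ) - i) ≤ f j := by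
  obtain ⟨d, hd⟩ := Nat.exists_eq_add_of_le (Fin.le_def.1 hij)
  induction d generalizing j with
  | zero => rw [Fin.ext (hd.trans (add_zero _))]; omega
  | succ d ih =>
    have hlt : (i : ℕ) + d < n := by omega
    have h₁ := ih (j := ⟨i + d, hlt⟩) (Fin.le_def.2 (by simp)) rfl
    have h₂ := hf (show (⟨i + d, hlt⟩ : Fin n) < j from Fin.lt_def.2 (by simp; omega))
    simp only at h₁
    omega

lemma mem_properPart_iff [PartialOrder α] [BoundedOrder α] {x : α} :
    x ∈ properPart α ↔ ⊥ < x ∧ x < ⊤ := by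
  rw [bot_lt_iff_ne_bot, lt_top_iff_ne_top]; rfl

lemma isAtom_of_grade_eq_one [PartialOrder α] [OrderBot α] [GradeMinOrder ℕ α] {a : α}
    (ha : grade ℕ a = 1) : IsAtom a := by
  refine ⟨fun h => by simp [h] at ha, fun x hx => ?_⟩
  have hx₀ : grade ℕ x = 0 := by have := grade_strictMono (𝕆 := ℕ) hx; omega
  exact (isMin_grade_iff.1 (by rw [hx₀]; exact isMin_bot)).eq_bot

lemma isEmpty_orderedSimplex_Ioo [Preorder α] [GradeOrder ℕ α] {x y : α} {j : ℕ}
    (h : grade ℕ y ≤ grade ℕ x + j + 1) : IsEmpty (OrderedSimplex (Set.Ioo x y) (j + 1)) := by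
  refine ⟨fun σ => ?_⟩
  have hmono := (grade_strictMono (𝕆 := ℕ)).comp σ.2.1
  have hlen := hmono.add_sub_le_apply_of_fin (Fin.zero_le (Fin.last j))
  have hx := grade_strictMono (𝕆 := ℕ) (σ.2.2 0).1
  have hy := grade_strictMono (𝕆 := ℕ) (σ.2.2 (Fin.last j)).2
  simp only [Function.comp_apply, Fin.val_last, Fin.val_zero] at hlen
  omega

lemma mem_simpCycles_succ {K : Type*} [CommRing K] [Preorder α] {s : Set α} {j : ℕ}
    {z : SimpChains K s (j + 1)} : z ∈ simpCycles K s (j + 1) ↔ simpBoundary K s j z = 0 :=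
  Iff.rfl

namespace ReducedHomology
variable {K : Type*} [CommRing K] [Preorder α] {s : Set α} {j : ℕ}

lemma exists_ne_zero_of_nontrivial (h : Nontrivial (ReducedHomology K s j)) :
    ∃ z ∈ simpCycles K s j, z ≠ 0 := by
  obtain ⟨x, hx⟩ := exists_ne (0 : ReducedHomology K s j)
  obtain ⟨z, rfl⟩ := Submodule.Quotient.mk_surjective _ x
  refine ⟨z, z.2, fun hz => hx ?_⟩
  rw [show z = 0 from Subtype.ext hz]
  rfl

lemma nontrivial_of_isEmpty (hs : IsEmpty (OrderedSimplex s (j + 1)))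
    {z : SimpChains K s j} (hz : z ∈ simpCycles K s j) (hz₀ : z ≠ 0) :
    Nontrivial (ReducedHomology K s j) := by
  have hbot : simpBoundaries K s j = ⊥ :=
    LinearMap.range_eq_bot.2 (LinearMap.ext fun c => by rw [Subsingleton.elim c 0, map_zero]; rfl)
  unfold ReducedHomology
  refine nontrivial_of_ne (Submodule.Quotient.mk ⟨z, hz⟩) 0 ?_
  rwa [Ne, Submodule.Quotient.mk_eq_zero, Submodule.mem_comap, hbot, Submodule.mem_bot]

end ReducedHomology

namespace OrderedSimplex

lemma face_apply [Preorder α] {s : Set α} {j : ℕ} (σ : OrderedSimplex s (j + 1))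
    (i : Fin (j + 1)) (l : Fin j) : (σ.face i).1 l = σ.1 (i.succAbove l) :=
  rfl

lemma ext_of_face_eq [Preorder α] {s : Set α} {j : ℕ} {σ σ' : OrderedSimplex s (j + 1)}
    {k : Fin (j + 1)} (hf : σ.face k = σ'.face k) (hk : σ.1 k = σ'.1 k) : σ = σ' := by
  refine Subtype.ext (funext fun x => ?_)
  rcases eq_or_ne x k with rfl | hx
  · exact hk
  · obtain ⟨l, rfl⟩ := Fin.exists_succAbove_eq hx
    exact congrFun (congrArg Subtype.val hf) l

section Graded
variable [PartialOrder α] [BoundedOrder α] [GradeMinOrder ℕ α]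

lemma grade_apply {m : ℕ} (hrank : grade ℕ (⊤ : α) = m + 2)
    (σ : OrderedSimplex (properPart α) (m + 1)) (k : Fin (m + 1)) :
    grade ℕ (σ.1 k) = k + 1 := by
  have hmono := (grade_strictMono (𝕆 := ℕ)).comp σ.2.1
  have hlow := hmono.add_sub_le_apply_of_fin (Fin.zero_le k)
  have hhigh := hmono.add_sub_le_apply_of_fin (Fin.le_last k)
  have hbot := grade_strictMono (𝕆 := ℕ) (mem_properPart_iff.1 (σ.2.2 0)).1
  have htop := grade_strictMono (𝕆 := ℕ) (mem_properPart_iff.1 (σ.2.2 (Fin.last m))).2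
  simp only [Function.comp_apply, Fin.val_last, Fin.val_zero, grade_bot] at *
  have := k.isLt
  omega

lemma eq_of_face_eq_face {m : ℕ} (hrank : grade ℕ (⊤ : α) = m + 2)
    {σ σ' : OrderedSimplex (properPart α) (m + 1)} {i k : Fin (m + 1)}
    (h : σ.face i = σ'.face k) : i = k := by
  wlog hik : i < k generalizing σ σ' i k
  · rcases lt_trichotomy i k with hlt | heq | hgt
    · exact absurd hlt hik
    · exact heq
    · exact (this h.symm hgt).symm
  have hi : (i : ℕ) < m := by omega
  have h₁ : grade ℕ ((σ.face i).1 ⟨i, hi⟩) = i + 2 := by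
    change grade ℕ (σ.1 (i.succAbove ⟨i, hi⟩)) = _
    rw [Fin.succAbove_of_le_castSucc i ⟨i, hi⟩ (Fin.le_def.2 le_rfl), grade_apply hrank]
    simp
  have h₂ : grade ℕ ((σ'.face k).1 ⟨i, hi⟩) = i + 1 := by
    change grade ℕ (σ'.1 (k.succAbove ⟨i, hi⟩)) = _
    rw [Fin.succAbove_of_castSucc_lt k ⟨i, hi⟩ hik, grade_apply hrank]
    simp
  rw [h] at h₁
  omega

lemma covBy_apply_succ {m : ℕ} (hrank : grade ℕ (⊤ : α) = m + 2)
    (σ : OrderedSimplex (properPart α) (m + 1)) (k : Fin m) :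
    σ.1 k.castSucc ⋖ σ.1 k.succ := by
  refine (covBy_iff_lt_covBy_grade (𝕆 := ℕ)).2 ⟨σ.2.1 k.castSucc_lt_succ, ?_⟩
  rw [grade_apply hrank, grade_apply hrank]
  simp

end Graded
end OrderedSimplex

section Boundary
variable {K : Type*} [CommRing K]

lemma simpBoundary_single [Preorder α] {s : Set α} {j : ℕ} (σ : OrderedSimplex s (j + 1))
    (r : K) :
    simpBoundary K s j (Finsupp.single σ r) =
      ∑ i : Fin (j + 1), (-1 : K) ^ (i : ℕ) • Finsupp.single (σ.face i) r := by
  simp [simpBoundary, Finsupp.lsum_single]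

open Classical in
lemma simpBoundary_apply [Preorder α] {s : Set α} {j : ℕ} (c : SimpChains K s (j + 1))
    (τ : OrderedSimplex s j) :
    simpBoundary K s j c τ =
      ∑ σ ∈ c.support, ∑ i : Fin (j + 1),
        (-1 : K) ^ (i : ℕ) * if σ.face i = τ then c σ else 0 := by
  rw [simpBoundary, Finsupp.lsum_apply, Finsupp.sum, Finsupp.finsetSum_apply]
  refine Finset.sum_congr rfl fun σ _ => ?_
  rw [LinearMap.sum_apply, Finsupp.finsetSum_apply]
  refine Finset.sum_congr rfl fun i _ => ?_
  rw [LinearMap.smul_apply, Finsupp.lsingle_apply, Finsupp.smul_apply, Finsupp.single_apply,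
    smul_eq_mul]

variable [PartialOrder α] [BoundedOrder α] [GradeMinOrder ℕ α] {m : ℕ}

open Classical in
lemma simpBoundary_apply_face (hrank : grade ℕ (⊤ : α) = m + 2)
    (z : SimpChains K (properPart α) (m + 1)) (σ : OrderedSimplex (properPart α) (m + 1))
    (k : Fin (m + 1)) :
    simpBoundary K (properPart α) m z (σ.face k) =
      (-1 : K) ^ (k : ℕ) * ∑ σ' ∈ z.support with σ'.face k = σ.face k, z σ' := by
  rw [simpBoundary_apply, Finset.sum_filter, Finset.mul_sum]
  refine Finset.sum_congr rfl fun σ' _ => ?_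
  refine Finset.sum_eq_single k (fun i _ hik => ?_) (by simp)
  rw [if_neg fun h => hik (OrderedSimplex.eq_of_face_eq_face hrank h), mul_zero]

lemma exists_ne_face_eq_of_simpBoundary_eq_zero (hrank : grade ℕ (⊤ : α) = m + 2)
    {z : SimpChains K (properPart α) (m + 1)} (hz : simpBoundary K (properPart α) m z = 0)
    {σ : OrderedSimplex (properPart α) (m + 1)} (hσ : z σ ≠ 0) (k : Fin (m + 1)) :
    ∃ σ', z σ' ≠ 0 ∧ σ'.face k = σ.face k ∧ σ' ≠ σ := by
  classical
  by_contra! hcon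
  have hfiber : {σ' ∈ z.support | σ'.face k = σ.face k} = {σ} := by
    ext σ'
    simp only [Finset.mem_filter, Finsupp.mem_support_iff, Finset.mem_singleton]
    exact ⟨fun h => hcon σ' h.1 h.2, by rintro rfl; exact ⟨hσ, rfl⟩⟩
  have h := simpBoundary_apply_face hrank z σ k
  rw [hz, hfiber, Finset.sum_singleton] at h
  exact hσ ((isUnit_neg_one.pow _).mul_right_eq_zero.1 h.symm)

end Boundary

section Lattice
variable {K : Type*} [CommRing K] [Lattice α] [BoundedOrder α] [GradeMinOrder ℕ α] {m : ℕ}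

lemma OrderedSimplex.apply_succ_eq_sup (hrank : grade ℕ (⊤ : α) = m + 2)
    {σ σ' : OrderedSimplex (properPart α) (m + 1)} {k : Fin m}
    (hface : σ'.face k.castSucc = σ.face k.castSucc) (hne : σ' ≠ σ) :
    σ.1 k.succ = σ.1 k.castSucc ⊔ σ'.1 k.castSucc := by
  have hsucc : σ'.1 k.succ = σ.1 k.succ := by
    simpa [face_apply] using congrFun (congrArg Subtype.val hface) k
  have hcov := covBy_apply_succ hrank σ k
  have hcov' := covBy_apply_succ hrank σ' k
  rw [hsucc] at hcov'
  refine ((hcov.wcovBy.eq_or_eq le_sup_left (sup_le hcov.le hcov'.le)).resolve_left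
    fun hsup => ?_).symm
  have hle : σ'.1 k.castSucc ≤ σ.1 k.castSucc := hsup ▸ le_sup_right
  rcases hcov'.wcovBy.eq_or_eq hle hcov.le with h | h
  · exact hne (ext_of_face_eq hface h.symm)
  · exact hcov.lt.ne h

lemma apply_le_of_forall_apply_zero_le (hrank : grade ℕ (⊤ : α) = m + 2)
    {z : SimpChains K (properPart α) (m + 1)} (hz : simpBoundary K (properPart α) m z = 0)
    {b : α} (h₀ : ∀ σ : OrderedSimplex (properPart α) (m + 1), z σ ≠ 0 → σ.1 0 ≤ b)
    {σ : OrderedSimplex (properPart α) (m + 1)} (hσ : z σ ≠ 0) (k : Fin (m + 1)) :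
    σ.1 k ≤ b := by
  induction k using Fin.induction generalizing σ with
  | zero => exact h₀ σ hσ
  | succ k ih =>
    obtain ⟨σ', hσ', hface, hne⟩ :=
      exists_ne_face_eq_of_simpBoundary_eq_zero hrank hz hσ k.castSucc
    rw [OrderedSimplex.apply_succ_eq_sup hrank hface hne]
    exact sup_le (ih hσ) (ih hσ')

lemma exists_apply_ne_zero_not_apply_zero_le (hrank : grade ℕ (⊤ : α) = m + 2)
    {z : SimpChains K (properPart α) (m + 1)} (hz : simpBoundary K (properPart α) m z = 0)
    (hz₀ : z ≠ 0) {b : α} (hb : b ≠ ⊤) :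
    ∃ σ : OrderedSimplex (properPart α) (m + 1), z σ ≠ 0 ∧ ¬ σ.1 0 ≤ b := by
  by_contra! h₀
  have hlast : ∀ σ : OrderedSimplex (properPart α) (m + 1), z σ ≠ 0 →
      σ.1 (Fin.last m) = b := by
    refine fun σ hσ => (apply_le_of_forall_apply_zero_le hrank hz h₀ hσ _).eq_of_not_lt
      fun hlt => ?_
    have hσb := grade_strictMono (𝕆 := ℕ) hlt
    have hbtop := grade_strictMono (𝕆 := ℕ) (lt_top_iff_ne_top.2 hb)
    rw [OrderedSimplex.grade_apply hrank] at hσb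
    simp only [Fin.val_last] at hσb
    omega
  obtain ⟨σ, hσ⟩ := Finsupp.ne_iff.1 hz₀
  obtain ⟨σ', hσ', hface, hne⟩ :=
    exists_ne_face_eq_of_simpBoundary_eq_zero hrank hz hσ (Fin.last m)
  exact hne (OrderedSimplex.ext_of_face_eq hface ((hlast σ' hσ').trans (hlast σ hσ).symm))

end Lattice

namespace OrderedSimplex
variable [PartialOrder α] [BoundedOrder α] {a : α}

def cons (ha : a ∈ properPart α) {j : ℕ} (τ : OrderedSimplex (Set.Ioo a ⊤) j) :
    OrderedSimplex (properPart α) (j + 1) :=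
  ⟨Fin.cons a τ.1, Fin.strictMono_cons.2 ⟨fun l => (τ.2.2 l).1, τ.2.1⟩,
    Fin.cases ha fun l => mem_properPart_iff.2
      ⟨(mem_properPart_iff.1 ha).1.trans (τ.2.2 l).1, (τ.2.2 l).2⟩⟩

lemma cons_injective (ha : a ∈ properPart α) {j : ℕ} :
    Function.Injective (cons ha (j := j)) :=
  fun _ _ h => Subtype.ext (Fin.cons_right_injective (α := fun _ => α) a (congrArg Subtype.val h))

lemma exists_cons_eq (ha : a ∈ properPart α) {j : ℕ}
    {σ : OrderedSimplex (properPart α) (j + 1)} (hσ : σ.1 0 = a) : ∃ τ, cons ha τ = σ :=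
  ⟨⟨Fin.tail σ.1, σ.2.1.comp Fin.strictMono_succ, fun l =>
      ⟨hσ ▸ σ.2.1 l.succ_pos, (mem_properPart_iff.1 (σ.2.2 l.succ)).2⟩⟩,
    Subtype.ext (hσ ▸ Fin.cons_self_tail σ.1)⟩

lemma face_succ_cons (ha : a ∈ properPart α) {j : ℕ}
    (τ : OrderedSimplex (Set.Ioo a ⊤) (j + 1)) (i : Fin (j + 1)) :
    (cons ha τ).face i.succ = cons ha (τ.face i) := by
  refine Subtype.ext (funext fun l => ?_)
  rw [face_apply]
  cases l using Fin.cases <;> simp [face_apply, cons]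

lemma eq_and_ne_zero_of_face_apply_zero_eq (hatom : IsAtom a) {j : ℕ}
    {σ : OrderedSimplex (properPart α) (j + 2)} {i : Fin (j + 2)} (h : (σ.face i).1 0 = a) :
    σ.1 0 = a ∧ i ≠ 0 := by
  rw [face_apply] at h
  have h₀ : σ.1 0 = a := (hatom.le_iff_eq (mem_properPart_iff.1 (σ.2.2 0)).1.ne').1
    (h ▸ σ.2.1.monotone (Fin.zero_le _))
  refine ⟨h₀, ?_⟩
  rintro rfl
  rw [Fin.succAbove_zero, ← h₀] at h
  exact (σ.2.1 (Fin.succ_pos 0)).ne' h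

end OrderedSimplex

section Link
variable (K : Type*) [CommRing K] [PartialOrder α] [BoundedOrder α] {a : α}

noncomputable def restrictLink (ha : a ∈ properPart α) (j : ℕ) :
    SimpChains K (properPart α) (j + 1) →ₗ[K] SimpChains K (Set.Ioo a ⊤) j :=
  Finsupp.lcomapDomain (OrderedSimplex.cons ha) (OrderedSimplex.cons_injective ha)

variable {K}

lemma restrictLink_apply (ha : a ∈ properPart α) {j : ℕ}
    (c : SimpChains K (properPart α) (j + 1)) (τ : OrderedSimplex (Set.Ioo a ⊤) j) :
    restrictLink K ha j c τ = c (τ.cons ha) :=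
  rfl

lemma restrictLink_single_cons (ha : a ∈ properPart α) {j : ℕ}
    (τ : OrderedSimplex (Set.Ioo a ⊤) j) (r : K) :
    restrictLink K ha j (Finsupp.single (τ.cons ha) r) = Finsupp.single τ r :=
  Finsupp.comapDomain_single _ _ _ _

lemma restrictLink_single_of_apply_zero_ne (ha : a ∈ properPart α) {j : ℕ}
    {σ : OrderedSimplex (properPart α) (j + 1)} (hσ : σ.1 0 ≠ a) (r : K) :
    restrictLink K ha j (Finsupp.single σ r) = 0 := by
  classical
  ext τ
  rw [restrictLink_apply, Finsupp.single_apply, if_neg (by rintro rfl; exact hσ rfl)]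
  rfl

lemma restrictLink_simpBoundary (ha : a ∈ properPart α) (hatom : IsAtom a) {j : ℕ}
    (c : SimpChains K (properPart α) (j + 2)) :
    restrictLink K ha j (simpBoundary K (properPart α) (j + 1) c) =
      -simpBoundary K (Set.Ioo a ⊤) j (restrictLink K ha (j + 1) c) := by
  suffices h : (restrictLink K ha j).comp (simpBoundary K (properPart α) (j + 1)) =
      -(simpBoundary K (Set.Ioo a ⊤) j).comp (restrictLink K ha (j + 1)) from
    LinearMap.congr_fun h c
  refine Finsupp.lhom_ext fun σ r => ?_
  -- Only the faces `(a :: τ).face (i + 1)` survive the restriction: nothing of the proper part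
  -- lies below the atom `a`.
  simp only [LinearMap.comp_apply, LinearMap.neg_apply, simpBoundary_single, map_sum, map_smul]
  by_cases hσ : σ.1 0 = a
  · obtain ⟨τ, rfl⟩ := OrderedSimplex.exists_cons_eq ha hσ
    rw [Fin.sum_univ_succ, restrictLink_single_of_apply_zero_ne ha
      (fun h => (OrderedSimplex.eq_and_ne_zero_of_face_apply_zero_eq hatom h).2 rfl),
      restrictLink_single_cons, simpBoundary_single]
    simp [OrderedSimplex.face_succ_cons, restrictLink_single_cons, pow_succ]
  · rw [restrictLink_single_of_apply_zero_ne ha hσ, map_zero, neg_zero]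
    refine Finset.sum_eq_zero fun i _ => ?_
    rw [restrictLink_single_of_apply_zero_ne ha
      (fun h => hσ (OrderedSimplex.eq_and_ne_zero_of_face_apply_zero_eq hatom h).1), smul_zero]

lemma restrictLink_mem_simpCycles (ha : a ∈ properPart α) (hatom : IsAtom a) {j : ℕ}
    {z : SimpChains K (properPart α) (j + 1)} (hz : z ∈ simpCycles K (properPart α) (j + 1)) :
    restrictLink K ha j z ∈ simpCycles K (Set.Ioo a ⊤) j := by
  cases j with
  | zero => exact Submodule.mem_top
  | succ j =>
    rw [mem_simpCycles_succ] at hz ⊢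
    rw [← neg_eq_zero, ← restrictLink_simpBoundary ha hatom, hz, map_zero]

end Link

lemma nontrivial_reducedHomology_Ioo_apply_zero {K : Type*} [CommRing K] [PartialOrder α]
    [BoundedOrder α] [GradeMinOrder ℕ α] {m : ℕ} (hrank : grade ℕ (⊤ : α) = m + 2)
    {z : SimpChains K (properPart α) (m + 1)} (hz : z ∈ simpCycles K (properPart α) (m + 1))
    {σ : OrderedSimplex (properPart α) (m + 1)} (hσ : z σ ≠ 0) :
    Nontrivial (ReducedHomology K (Set.Ioo (σ.1 0) ⊤) m) := by
  have hgrade : grade ℕ (σ.1 0) = 1 := by simpa using σ.grade_apply hrank 0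
  obtain ⟨τ, hτ⟩ := OrderedSimplex.exists_cons_eq (σ.2.2 0) rfl
  refine ReducedHomology.nontrivial_of_isEmpty (isEmpty_orderedSimplex_Ioo (by omega))
    (restrictLink_mem_simpCycles (σ.2.2 0) (isAtom_of_grade_eq_one hgrade) hz) fun h => hσ ?_
  rw [← hτ, ← restrictLink_apply, h]
  rfl

theorem exists_incomparable_atom_general
    (n : ℕ) (hn : 2 ≤ n)
    (α : Type*) [Lattice α] [BoundedOrder α] [GradeMinOrder ℕ α]
    (hrank : grade ℕ (⊤ : α) = n)
    (K : Type*) [Field K]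
    (hH : Nontrivial (ReducedHomology K (properPart α) (n - 1)))
    (b : α) (hb : grade ℕ b = n - 1) :
    ∃ a : α, grade ℕ a = 1 ∧ ¬ a ≤ b ∧ ¬ b ≤ a ∧
      Nontrivial (ReducedHomology K (Set.Ioo a (⊤ : α)) (n - 2)) := by
  obtain ⟨m, rfl⟩ : ∃ m, n = m + 2 := ⟨n - 2, by omega⟩
  obtain ⟨z, hz, hz₀⟩ := ReducedHomology.exists_ne_zero_of_nontrivial hH
  obtain ⟨σ, hσ, hσb⟩ := exists_apply_ne_zero_not_apply_zero_le hrank hz hz₀ (b := b)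
    (by rintro rfl; omega)
  have hgrade : grade ℕ (σ.1 0) = 1 := by simpa using σ.grade_apply hrank 0
  refine ⟨σ.1 0, hgrade, hσb, fun hba => hσb (hba.eq_of_not_lt fun hlt => ?_).ge,
    nontrivial_reducedHomology_Ioo_apply_zero hrank hz hσ⟩
  have := grade_strictMono (𝕆 := ℕ) hlt
  omega

/-- **Step 2.**  Let `L` be a finite graded lattice of rank `n ≥ 2` whose proper part
has nonzero reduced homology `H̃_{n-2}` over `K`, and let `b` be a coatom of `L`.
Then some atom `a` of `L` is incomparable to `b` and satisfies
`H̃_{n-3}(Δ(a,⊤); K) ≠ 0`. -/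
theorem exists_incomparable_atom
    (n : ℕ) (hn : 2 ≤ n)
    (α : Type*) [Lattice α] [BoundedOrder α] [Fintype α] [GradeMinOrder ℕ α]
    (hrank : grade ℕ (⊤ : α) = n)
    (K : Type*) [Field K]
    (hH : Nontrivial (ReducedHomology K (properPart α) (n - 1)))
    (b : α) (hb : grade ℕ b = n - 1) :
    ∃ a : α, grade ℕ a = 1 ∧ ¬ a ≤ b ∧ ¬ b ≤ a ∧
      Nontrivial (ReducedHomology K (Set.Ioo a (⊤ : α)) (n - 2)) :=
  exists_incomparable_atom_general n hn α hrank K hH b hb
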